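/- arXiv:1606.03504 — 2 statements merged into one kernel-verified Lean document; each statement's English description precedes it below -/
import Mathlib

section
/- Let X ∈ ℝ^{d_1×⋯×d_k} and δ = (δ_1,…,δ_k) ∈ (0,1]^k be such that δ_j ≥ max{‖P_j(X)u‖_{ℓ∞} : u ∈ ℝ^{d_j}, ‖u‖_{ℓ2} ≤ 1} for every j = 1,…,k. Then for every tensor W ∈ ℝ^{d_1×⋯×d_k}, ‖Q⁰_X W‖_{∘,δ} = ‖Q⁰_X W‖ ≤ ‖W‖_{∘,δ}. Consequently ‖X‖_{⋆,δ} = ‖X‖_*. -/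
open scoped BigOperators

namespace IncoherentTensor

variable {k : ℕ}

/-- A `k`-th order tensor in `ℝ^{d 1 × ⋯ × d k}`. -/
abbrev Tensor (d : Fin k → ℕ) : Type := (∀ j, Fin (d j)) → ℝ

variable {d : Fin k → ℕ}

/-- Entrywise inner product of tensors. -/
noncomputable def tinner (X Y : Tensor d) : ℝ := ∑ a : ∀ j, Fin (d j), X a * Y a

/-- Hilbert–Schmidt (entrywise ℓ2) norm. -/
noncomputable def hsNorm (X : Tensor d) : ℝ := Real.sqrt (tinner X X)

/-- Largest absolute entry. -/
noncomputable def maxNorm (X : Tensor d) : ℝ := ⨆ a, |X a|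

/-- Euclidean norm of a vector. -/
noncomputable def l2 {n : ℕ} (u : Fin n → ℝ) : ℝ := Real.sqrt (∑ i, u i ^ 2)

/-- Supremum norm of a vector. -/
noncomputable def linf {n : ℕ} (u : Fin n → ℝ) : ℝ := ⨆ i, |u i|

/-- Rank-one tensor `u_1 ⊗ ⋯ ⊗ u_k`. -/
def rankOne (u : ∀ j, Fin (d j) → ℝ) : Tensor d := fun a => ∏ j, u j (a j)

/-- Tensor spectral norm. -/
noncomputable def spectralNorm (X : Tensor d) : ℝ :=
  sSup {r | ∃ u : ∀ j, Fin (d j) → ℝ, (∀ j, l2 (u j) ≤ 1) ∧ r = tinner X (rankOne u)}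

/-- Tensor nuclear norm. -/
noncomputable def nuclearNorm (X : Tensor d) : ℝ :=
  sSup {r | ∃ Y : Tensor d, spectralNorm Y ≤ 1 ∧ r = tinner X Y}

/-- The set `U(δ)` of rank-one tensors satisfying the incoherence constraints in all but
two directions. -/
def Uset (δ : Fin k → ℝ) : Set (Tensor d) :=
  {Y | ∃ j1 j2 : Fin k, j1 < j2 ∧ ∃ u : ∀ j, Fin (d j) → ℝ,
    (∀ j, l2 (u j) ≤ 1) ∧ (∀ j, j ≠ j1 → j ≠ j2 → linf (u j) ≤ δ j) ∧ Y = rankOne u}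

/-- Incoherent spectral norm `‖X‖_{∘,δ}`. -/
noncomputable def onorm (δ : Fin k → ℝ) (X : Tensor d) : ℝ :=
  sSup {r | ∃ Y ∈ Uset (d := d) δ, r = tinner Y X}

/-- Incoherent nuclear norm `‖X‖_{⋆,δ}`. -/
noncomputable def starNorm (δ : Fin k → ℝ) (X : Tensor d) : ℝ :=
  sSup {r | ∃ Y : Tensor d, onorm δ Y ≤ 1 ∧ r = tinner Y X}

/-- The span `L_j(X)` of the mode-`j` fibers of `X`. -/
noncomputable def fiberSpan (X : Tensor d) (j : Fin k) :
    Submodule ℝ (EuclideanSpace ℝ (Fin (d j))) :=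
  Submodule.span ℝ {v | ∃ a : ∀ i, Fin (d i), v = fun i => X (Function.update a j i)}

/-- Tucker rank `r_j(X) = dim L_j(X)`. -/
noncomputable def tuckerRank (X : Tensor d) (j : Fin k) : ℕ :=
  Module.finrank ℝ (fiberSpan X j)

/-- Orthogonal projection `P_j(X)` of `ℝ^{d_j}` onto `L_j(X)`. -/
noncomputable def projMode (X : Tensor d) (j : Fin k) :
    EuclideanSpace ℝ (Fin (d j)) →L[ℝ] EuclideanSpace ℝ (Fin (d j)) :=
  (fiberSpan X j).subtypeL.comp (fiberSpan X j).orthogonalProjectionOnto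

/-- The matrix of `P_j(X)` in the standard basis. -/
noncomputable def Pmat (X : Tensor d) (j : Fin k) : Matrix (Fin (d j)) (Fin (d j)) ℝ :=
  Matrix.of fun a b => projMode X j (EuclideanSpace.single b 1) a

/-- Action of a Kronecker product `A_1 ⊗ ⋯ ⊗ A_k` of matrices on a tensor. -/
noncomputable def kronApply (A : ∀ j, Matrix (Fin (d j)) (Fin (d j)) ℝ) (W : Tensor d) :
    Tensor d :=
  fun a => ∑ b : ∀ j, Fin (d j), (∏ j, A j (a j) (b j)) * W b

/-- `Q⁰_X = P_1 ⊗ ⋯ ⊗ P_k`. -/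
noncomputable def Q0 (X : Tensor d) (W : Tensor d) : Tensor d :=
  kronApply (fun j => Pmat X j) W

/-- `Q_X = Q⁰_X + Σ_j P_1 ⊗ ⋯ ⊗ P_j^⊥ ⊗ ⋯ ⊗ P_k`. -/
noncomputable def QX (X : Tensor d) (W : Tensor d) : Tensor d :=
  Q0 X W + ∑ j : Fin k, kronApply (fun l => if l = j then 1 - Pmat X l else Pmat X l) W

/-- `Q_X^⊥ = I − Q_X`. -/
noncomputable def Qperp (X : Tensor d) (W : Tensor d) : Tensor d := W - QX X W

/-- Coherence `μ(U)` of a subspace of `ℝ^n`. -/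
noncomputable def coherence {n : ℕ} (U : Submodule ℝ (EuclideanSpace ℝ (Fin n))) : ℝ :=
  ((n : ℝ) / (Module.finrank ℝ U : ℝ)) *
    ⨆ i : Fin n, ‖U.orthogonalProjectionOnto (EuclideanSpace.single i 1)‖ ^ 2

/-- Probability of an event on a finite sample space, under the uniform distribution. -/
noncomputable def prob {Ω : Type*} [Fintype Ω] (P : Ω → Prop) : ℝ :=
  (Nat.card {ω : Ω // P ω} : ℝ) / (Fintype.card Ω : ℝ)

/-- `P_ω X` retains the entry `ω` of `X` and zeroes out the rest. -/
noncomputable def Pentry (ω : ∀ j, Fin (d j)) (X : Tensor d) : Tensor d :=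
  fun a => if a = ω then X a else 0

/-- `P_Ω X` retains the entries of `X` on `Ω` and zeroes out the rest. -/
noncomputable def POmega (S : Finset (∀ j, Fin (d j))) (X : Tensor d) : Tensor d :=
  fun a => if a ∈ S then X a else 0

/-- The empirical average `X̄ = (X_1 + ⋯ + X_n)/n` of `X_i = (d_1⋯d_k)·P_{ω_i} A`. -/
noncomputable def sampleAvg (A : Tensor d) (n : ℕ) (s : Fin n → ∀ j, Fin (d j)) : Tensor d :=
  fun a => (1 / (n : ℝ)) * ∑ i : Fin n, (∏ j, (d j : ℝ)) * Pentry (s i) A a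

/-- `Y` is `μ`-incoherent. -/
noncomputable def muIncoherent (μ : ℝ) (Y : Tensor d) : Prop :=
  ∀ j, ∀ u : EuclideanSpace ℝ (Fin (d j)), ‖u‖ ≤ 1 →
    linf (fun i => projMode Y j u i) ≤ Real.sqrt (μ * (tuckerRank Y j : ℝ) / (d j : ℝ))


/-! `Q⁰_X = P_1 ⊗ ⋯ ⊗ P_k` is a self-adjoint idempotent fixing `X` and sending `u_1 ⊗ ⋯ ⊗ u_k`
to `P_1u_1 ⊗ ⋯ ⊗ P_ku_k`. The hypothesis on `δ` says that the latter lies in `U(δ)` whenever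
all `‖u_j‖ ≤ 1`, so every value `⟨Q⁰_X W, u_1 ⊗ ⋯ ⊗ u_k⟩ = ⟨W, P_1u_1 ⊗ ⋯ ⊗ P_ku_k⟩` of the
spectral norm of `Q⁰_X W` is a value of the incoherent spectral norm of `W`, and (as
`Q⁰_X Q⁰_X = Q⁰_X`) also of `Q⁰_X W`. For the nuclear norms, `⟨Y, X⟩ = ⟨X, Q⁰_X Y⟩` with
`‖Q⁰_X Y‖ ≤ ‖Y‖_{∘,δ}`, so both suprema run over the same set of values. -/

lemma abs_le_l2 {n : ℕ} (u : Fin n → ℝ) (i : Fin n) : |u i| ≤ l2 u := by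
  rw [l2, ← Real.sqrt_sq_eq_abs]
  exact Real.sqrt_le_sqrt <|
    Finset.single_le_sum (f := fun i => u i ^ 2) (fun _ _ => sq_nonneg _) (Finset.mem_univ i)

lemma norm_eq_l2 {n : ℕ} (v : EuclideanSpace ℝ (Fin n)) : ‖v‖ = l2 (fun i => v i) := by
  simp only [EuclideanSpace.norm_eq, l2, Real.norm_eq_abs, sq_abs]

lemma tinner_comm (X Y : Tensor d) : tinner X Y = tinner Y X :=
  Finset.sum_congr rfl fun _ _ => mul_comm _ _

lemma abs_rankOne_le_one {u : ∀ j, Fin (d j) → ℝ} (hu : ∀ j, l2 (u j) ≤ 1)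
    (a : ∀ j, Fin (d j)) : |rankOne u a| ≤ 1 := by
  rw [rankOne, Finset.abs_prod]
  exact Finset.prod_le_one (fun _ _ => abs_nonneg _) fun j _ => (abs_le_l2 _ _).trans (hu j)

lemma rankOne_zero (hk : 0 < k) : rankOne (d := d) (fun _ _ => 0) = 0 :=
  funext fun _ => Finset.prod_eq_zero (Finset.mem_univ ⟨0, hk⟩) rfl

section SpectralNorm

variable (X : Tensor d)

lemma bddAbove_spectralSet :
    BddAbove {r | ∃ u : ∀ j, Fin (d j) → ℝ, (∀ j, l2 (u j) ≤ 1) ∧ r = tinner X (rankOne u)} := by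
  refine ⟨∑ a, |X a|, ?_⟩
  rintro _ ⟨u, hu, rfl⟩
  calc tinner X (rankOne u) ≤ ∑ a, |X a * rankOne u a| :=
        (le_abs_self _).trans (Finset.abs_sum_le_sum_abs _ _)
    _ ≤ ∑ a, |X a| := Finset.sum_le_sum fun a _ => by
        rw [abs_mul]; exact mul_le_of_le_one_right (abs_nonneg _) (abs_rankOne_le_one hu a)

lemma le_spectralNorm {u : ∀ j, Fin (d j) → ℝ} (hu : ∀ j, l2 (u j) ≤ 1) :
    tinner X (rankOne u) ≤ spectralNorm X :=
  le_csSup (bddAbove_spectralSet X) ⟨u, hu, rfl⟩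

lemma spectralNorm_le {c : ℝ}
    (h : ∀ u : ∀ j, Fin (d j) → ℝ, (∀ j, l2 (u j) ≤ 1) → tinner X (rankOne u) ≤ c) :
    spectralNorm X ≤ c :=
  csSup_le ⟨_, fun _ _ => 0, fun _ => by simp [l2], rfl⟩ fun _ ⟨u, hu, hr⟩ => hr ▸ h u hu

lemma spectralNorm_nonneg (hk : 0 < k) : 0 ≤ spectralNorm X := by
  simpa [rankOne_zero hk, tinner] using
    le_spectralNorm X (u := fun _ _ => 0) fun _ => by simp [l2]

lemma le_onorm (δ : Fin k → ℝ) {Y : Tensor d} (hY : Y ∈ Uset δ) : tinner Y X ≤ onorm δ X := by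
  refine le_csSup ⟨spectralNorm X, ?_⟩ ⟨Y, hY, rfl⟩
  rintro _ ⟨_, ⟨_, _, _, u, hu, _, rfl⟩, rfl⟩
  exact tinner_comm (rankOne u) X ▸ le_spectralNorm X hu

lemma onorm_le_spectralNorm (hk : 0 < k) (δ : Fin k → ℝ) : onorm δ X ≤ spectralNorm X := by
  refine Real.sSup_le ?_ (spectralNorm_nonneg X hk)
  rintro _ ⟨_, ⟨_, _, _, u, hu, _, rfl⟩, rfl⟩
  exact tinner_comm (rankOne u) X ▸ le_spectralNorm X hu

end SpectralNorm

lemma starNorm_eq_nuclearNorm_of_spectralNorm_le_onorm (hk : 0 < k) {δ : Fin k → ℝ}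
    {X : Tensor d} (Q : Tensor d → Tensor d) (hQ : ∀ Y, spectralNorm (Q Y) ≤ onorm δ Y)
    (hQX : ∀ Y, tinner Y X = tinner X (Q Y)) :
    starNorm δ X = nuclearNorm X := by
  refine congrArg sSup (Set.ext fun r => ⟨?_, ?_⟩)
  · rintro ⟨Y, hY, rfl⟩
    exact ⟨Q Y, (hQ Y).trans hY, hQX Y⟩
  · rintro ⟨Y, hY, rfl⟩
    exact ⟨Y, (onorm_le_spectralNorm Y hk δ).trans hY, tinner_comm X Y⟩

section Projection

open scoped RealInnerProductSpace

variable (X : Tensor d) (j : Fin k)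

lemma projMode_apply_eq_inner (v : EuclideanSpace ℝ (Fin (d j))) (i : Fin (d j)) :
    projMode X j v i = ⟪(fiberSpan X j).starProjection (EuclideanSpace.single i 1), v⟫ := by
  rw [Submodule.inner_starProjection_left_eq_right, EuclideanSpace.inner_single_left, map_one,
    one_mul]
  rfl

lemma Pmat_symm (a b : Fin (d j)) : Pmat X j a b = Pmat X j b a := by
  rw [Pmat, Matrix.of_apply, Matrix.of_apply, projMode_apply_eq_inner, projMode_apply_eq_inner,
    Submodule.inner_starProjection_left_eq_right, real_inner_comm]

lemma projMode_apply (v : EuclideanSpace ℝ (Fin (d j))) (i : Fin (d j)) :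
    projMode X j v i = ∑ c, Pmat X j i c * v c := by
  rw [projMode_apply_eq_inner, PiLp.inner_apply]
  refine Finset.sum_congr rfl fun c _ => ?_
  rw [Pmat_symm, Real.inner_apply]
  rfl

lemma projMode_of_mem {v : EuclideanSpace ℝ (Fin (d j))} (hv : v ∈ fiberSpan X j) :
    projMode X j v = v :=
  Submodule.starProjection_eq_self_iff.mpr hv

lemma projMode_mem (v : EuclideanSpace ℝ (Fin (d j))) : projMode X j v ∈ fiberSpan X j :=
  Submodule.coe_mem _

lemma Pmat_mul_self : Pmat X j * Pmat X j = Pmat X j := by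
  ext a b
  have h : projMode X j (projMode X j (EuclideanSpace.single b 1)) a
      = ∑ c, Pmat X j a c * Pmat X j c b := projMode_apply ..
  rw [Matrix.mul_apply, ← h, projMode_of_mem X j (projMode_mem X j _)]
  rfl

lemma l2_projMode_le (v : EuclideanSpace ℝ (Fin (d j))) :
    l2 (fun i => projMode X j v i) ≤ ‖v‖ :=
  norm_eq_l2 (projMode X j v) ▸ Submodule.norm_starProjection_apply_le _ v

end Projection

section Kronecker

variable (A B : ∀ j, Matrix (Fin (d j)) (Fin (d j)) ℝ)

lemma kronApply_kronApply (W : Tensor d) :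
    kronApply A (kronApply B W) = kronApply (fun j => A j * B j) W := by
  funext a
  simp only [kronApply, Finset.mul_sum]
  rw [Finset.sum_comm]
  refine Finset.sum_congr rfl fun c _ => ?_
  simp only [Matrix.mul_apply]
  rw [Fintype.prod_sum (f := fun j bj => A j (a j) bj * B j bj (c j)), Finset.sum_mul]
  refine Finset.sum_congr rfl fun b _ => ?_
  rw [Finset.prod_mul_distrib, ← mul_assoc]

lemma kronApply_rankOne (u : ∀ j, Fin (d j) → ℝ) :
    kronApply A (rankOne u) = rankOne (fun j i => ∑ b, A j i b * u j b) := by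
  funext a
  simp only [kronApply, rankOne]
  rw [Fintype.prod_sum (f := fun j bj => A j (a j) bj * u j bj)]
  exact Finset.sum_congr rfl fun b _ => Finset.prod_mul_distrib.symm

lemma kronApply_one (W : Tensor d) : kronApply 1 W = W := by
  funext a
  rw [kronApply, Finset.sum_eq_single a]
  · simp
  · intro b _ hb
    obtain ⟨j, hj⟩ : ∃ j, a j ≠ b j := by
      by_contra! h
      exact hb (funext fun j => (h j).symm)
    rw [Finset.prod_eq_zero (Finset.mem_univ j) (by simp [hj]), zero_mul]
  · simp

lemma kronApply_mulSingle_apply (j₀ : Fin k)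
    (M : Matrix (Fin (d j₀)) (Fin (d j₀)) ℝ) (W : Tensor d) (a : ∀ j, Fin (d j)) :
    kronApply (Pi.mulSingle j₀ M) W a = ∑ i, M (a j₀) i * W (Function.update a j₀ i) := by
  classical
  have h_off : ∀ b ∈ Finset.univ, b ∉ Finset.univ.image (Function.update a j₀) →
      (∏ j, Pi.mulSingle (M := fun j => Matrix (Fin (d j)) (Fin (d j)) ℝ) j₀ M j (a j) (b j)) *
        W b = 0 := by
    intro b _ hb
    obtain ⟨j, hj, hne⟩ : ∃ j, j ≠ j₀ ∧ b j ≠ a j := by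
      by_contra! h
      refine hb (Finset.mem_image.mpr ⟨b j₀, Finset.mem_univ _, funext fun j => ?_⟩)
      by_cases hj : j = j₀
      · subst hj; rw [Function.update_self]
      · rw [Function.update_of_ne hj, h j hj]
    rw [Finset.prod_eq_zero (Finset.mem_univ j)
      (by simp [Pi.mulSingle_eq_of_ne hj, Ne.symm hne]), zero_mul]
  have h_on : ∀ i, ∏ j, Pi.mulSingle (M := fun j => Matrix (Fin (d j)) (Fin (d j)) ℝ) j₀ M j
      (a j) (Function.update a j₀ i j) = M (a j₀) i := by
    intro i
    rw [Finset.prod_eq_single j₀ (fun j _ hj => by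
      rw [Pi.mulSingle_eq_of_ne hj, Function.update_of_ne hj, Matrix.one_apply_eq]) (by simp)]
    rw [Pi.mulSingle_eq_same, Function.update_self]
  rw [kronApply, ← Finset.sum_subset (Finset.subset_univ _) h_off,
    Finset.sum_image fun _ _ _ _ h => Function.update_injective a j₀ h]
  simp only [h_on]

end Kronecker

section Q0

variable (X : Tensor d)

lemma kronApply_mulSingle_Pmat_self (j : Fin k) :
    kronApply (Pi.mulSingle j (Pmat X j)) X = X := by
  funext a
  have h_fiber : WithLp.toLp 2 (fun i => X (Function.update a j i)) ∈ fiberSpan X j :=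
    Submodule.subset_span ⟨a, rfl⟩
  have h_proj := projMode_apply X j (WithLp.toLp 2 fun i => X (Function.update a j i)) (a j)
  rw [kronApply_mulSingle_apply, ← h_proj, projMode_of_mem X j h_fiber]
  exact congrArg X (Function.update_eq_self j a)

lemma Q0_self : Q0 X X = X := by
  suffices h : ∀ s : Finset (Fin k), kronApply (fun j => if j ∈ s then Pmat X j else 1) X = X by
    simpa [Q0] using h Finset.univ
  intro s
  induction s using Finset.induction_on with
  | empty =>
    simp only [Finset.notMem_empty, if_false]
    exact kronApply_one X
  | @insert j₀ s hj₀ ih =>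
    have h_split : (fun j => if j ∈ insert j₀ s then Pmat X j else 1)
        = fun j => Pi.mulSingle j₀ (Pmat X j₀) j * (if j ∈ s then Pmat X j else 1) := by
      funext j
      by_cases h : j = j₀
      · subst h; simp [hj₀]
      · simp [h]
    rw [h_split, ← kronApply_kronApply, ih, kronApply_mulSingle_Pmat_self]

lemma Q0_Q0 (W : Tensor d) : Q0 X (Q0 X W) = Q0 X W := by
  simp only [Q0, kronApply_kronApply, Pmat_mul_self]

lemma tinner_Q0_left (W Z : Tensor d) : tinner (Q0 X W) Z = tinner W (Q0 X Z) := by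
  simp only [tinner, Q0, kronApply, Finset.sum_mul, Finset.mul_sum]
  rw [Finset.sum_comm]
  refine Finset.sum_congr rfl fun b _ => Finset.sum_congr rfl fun a _ => ?_
  rw [Finset.prod_congr rfl fun j _ => Pmat_symm X j (a j) (b j)]
  ring

lemma Q0_rankOne (u : ∀ j, Fin (d j) → ℝ) :
    Q0 X (rankOne u) = rankOne (fun j i => projMode X j (WithLp.toLp 2 (u j)) i) := by
  simp only [Q0, kronApply_rankOne, projMode_apply]

lemma tinner_Q0_self (Y : Tensor d) : tinner X (Q0 X Y) = tinner Y X := by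
  rw [tinner_comm, tinner_Q0_left, Q0_self]

lemma tinner_Q0_rankOne (W : Tensor d) (u : ∀ j, Fin (d j) → ℝ) :
    tinner (Q0 X W) (rankOne u) =
      tinner (rankOne fun j i => projMode X j (WithLp.toLp 2 (u j)) i) W := by
  rw [tinner_Q0_left, Q0_rankOne, tinner_comm]

end Q0

section Incoherence

variable {X : Tensor d} {δ : Fin k → ℝ}

lemma rankOne_projMode_mem_Uset (hk : 2 ≤ k)
    (hmax : ∀ j, ∀ u : EuclideanSpace ℝ (Fin (d j)), ‖u‖ ≤ 1 →
      linf (fun i => projMode X j u i) ≤ δ j)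
    {u : ∀ j, Fin (d j) → ℝ} (hu : ∀ j, l2 (u j) ≤ 1) :
    rankOne (fun j i => projMode X j (WithLp.toLp 2 (u j)) i) ∈ Uset δ := by
  have hu' : ∀ j, ‖WithLp.toLp 2 (u j)‖ ≤ 1 := fun j => by rw [norm_eq_l2]; exact hu j
  exact ⟨⟨0, by omega⟩, ⟨1, by omega⟩, Fin.mk_lt_mk.mpr zero_lt_one, _,
    fun j => (l2_projMode_le X j _).trans (hu' j), fun j _ _ => hmax j _ (hu' j), rfl⟩

lemma spectralNorm_Q0_le_onorm (hk : 2 ≤ k)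
    (hmax : ∀ j, ∀ u : EuclideanSpace ℝ (Fin (d j)), ‖u‖ ≤ 1 →
      linf (fun i => projMode X j u i) ≤ δ j)
    (W : Tensor d) : spectralNorm (Q0 X W) ≤ onorm δ W :=
  spectralNorm_le _ fun u hu =>
    tinner_Q0_rankOne X W u ▸ le_onorm W δ (rankOne_projMode_mem_Uset hk hmax hu)

end Incoherence

theorem statement1_general {k : ℕ} (hk : 2 ≤ k) {d : Fin k → ℕ} (X : Tensor d)
    (δ : Fin k → ℝ)
    (hmax : ∀ j, ∀ u : EuclideanSpace ℝ (Fin (d j)), ‖u‖ ≤ 1 →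
      linf (fun i => projMode X j u i) ≤ δ j) :
    (∀ W : Tensor d,
      onorm δ (Q0 X W) = spectralNorm (Q0 X W) ∧ spectralNorm (Q0 X W) ≤ onorm δ W) ∧
    starNorm δ X = nuclearNorm X := by
  have hk₀ : 0 < k := by omega
  have h_compress : ∀ W, spectralNorm (Q0 X W) ≤ onorm δ W := spectralNorm_Q0_le_onorm hk hmax
  refine ⟨fun W => ⟨le_antisymm (onorm_le_spectralNorm _ hk₀ δ) ?_, h_compress W⟩, ?_⟩
  · simpa only [Q0_Q0] using h_compress (Q0 X W)
  · exact starNorm_eq_nuclearNorm_of_spectralNorm_le_onorm hk₀ (Q0 X) h_compress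
      fun Y => (tinner_Q0_self X Y).symm

/-- Proposition 2 of Yuan–Zhang: if `δ_j` dominates the incoherence of
`L_j(X)` for every `j`, then `‖Q⁰_X W‖_{∘,δ} = ‖Q⁰_X W‖ ≤ ‖W‖_{∘,δ}` for every `W`, and
consequently `‖X‖_{⋆,δ} = ‖X‖_*`. -/
theorem statement1 {k : ℕ} (hk : 2 ≤ k) {d : Fin k → ℕ} (X : Tensor d)
    (δ : Fin k → ℝ) (hδ : ∀ j, δ j ∈ Set.Ioc (0 : ℝ) 1)
    (hmax : ∀ j, ∀ u : EuclideanSpace ℝ (Fin (d j)), ‖u‖ ≤ 1 →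
      linf (fun i => projMode X j u i) ≤ δ j) :
    (∀ W : Tensor d,
      onorm δ (Q0 X W) = spectralNorm (Q0 X W) ∧ spectralNorm (Q0 X W) ≤ onorm δ W) ∧
    starNorm δ X = nuclearNorm X :=
  statement1_general hk X δ hmax

end IncoherentTensor
end

section
/- Let d be a positive integer, δ ∈ [1/√d, 1], let m be the integer with 2^{m/2} < δ√d ≤ 2^{(m+1)/2}, and let 0 < c ≤ 1. Then the set {w ∈ ℝ^d : ‖w‖_{ℓ2} ≤ c and every coordinate of w belongs to {± c·2^{j/2}/√(2d) : j = 0,…,m}} has cardinality at most exp(1.344 + 3.082·d). -/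
open scoped BigOperators

namespace IncoherentTensor

variable {k : ℕ}

variable {d : Fin k → ℕ}

/-! Writing each coordinate as `w i = ± c 2^{j_i/2} / √(2d)`, the constraint `‖w‖ ≤ c` becomes
`∑ i, 2^{j_i} ≤ 2d`. Weighting each admissible choice of signs and exponents by
`exp (2d - ∑ i, 2^{j_i}) ≥ 1` bounds their number by `e^{2d} (2 ∑_j e^{-2^j})^d ≤ e^{2d} 2^d ≤ e^{3d}`. -/

open Finset Real

theorem card_sum_le_le_exp_mul {ι α : Type*} [Fintype ι] (S : Finset α) (f : α → ℝ) (N : ℝ) :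
    (Nat.card {g : ι → α // (∀ i, g i ∈ S) ∧ ∑ i, f (g i) ≤ N} : ℝ) ≤
      exp N * (∑ a ∈ S, exp (-f a)) ^ Fintype.card ι := by
  classical
  set T := (Fintype.piFinset fun _ : ι => S).filter fun g => ∑ i, f (g i) ≤ N
  have hT : Nat.card {g : ι → α // (∀ i, g i ∈ S) ∧ ∑ i, f (g i) ≤ N} = #T := by
    rw [← Nat.card_eq_finsetCard]
    exact Nat.card_congr (Equiv.subtypeEquivRight fun g => by simp [T])
  rw [hT, ← card_univ, ← prod_const, prod_univ_sum, mul_sum, card_eq_sum_ones, Nat.cast_sum]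
  calc ∑ g ∈ T, ((1 : ℕ) : ℝ)
      ≤ ∑ g ∈ T, exp (N - ∑ i, f (g i)) :=
        sum_le_sum fun g hg => by simpa using (mem_filter.1 hg).2
    _ ≤ ∑ g ∈ Fintype.piFinset fun _ : ι => S, exp (N - ∑ i, f (g i)) :=
        sum_le_sum_of_subset_of_nonneg (filter_subset _ _) fun _ _ _ => (exp_pos _).le
    _ = _ := by
        refine sum_congr rfl fun g _ => ?_
        rw [sub_eq_add_neg, exp_add, ← sum_neg_distrib, exp_sum]

theorem sum_range_exp_neg_two_pow_le_one (n : ℕ) : ∑ j ∈ range n, exp (-(2 : ℝ) ^ j) ≤ 1 := by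
  have hexp : exp (-1) ≤ 1 / 2 := by
    rw [exp_neg, one_div]
    exact inv_anti₀ two_pos (by linarith [add_one_le_exp (1 : ℝ)])
  calc ∑ j ∈ range n, exp (-(2 : ℝ) ^ j)
      ≤ ∑ j ∈ range n, 1 / 2 * (1 / 2 : ℝ) ^ j := by
        refine sum_le_sum fun j _ => ?_
        have hj : ((j + 1 : ℕ) : ℝ) ≤ 2 ^ j := by exact_mod_cast Nat.lt_two_pow_self
        calc exp (-(2 : ℝ) ^ j) ≤ exp (-1) ^ (j + 1) := by
              rw [← exp_nat_mul]; exact exp_le_exp.2 (by linarith)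
          _ ≤ (1 / 2) ^ (j + 1) := pow_le_pow_left₀ (exp_pos _).le hexp _
          _ = 1 / 2 * (1 / 2) ^ j := by ring
    _ ≤ 1 / 2 * 2 := by rw [← mul_sum]; gcongr; exact sum_geometric_two_le n
    _ = 1 := by norm_num

noncomputable def gridLevel (c : ℝ) (n j : ℕ) : ℝ := c * 2 ^ ((j : ℝ) / 2) / √(2 * n)

noncomputable def grid (c : ℝ) (n m : ℕ) : Finset ℝ :=
  (range (m + 1) ×ˢ {1, -1}).image fun p : ℕ × ℝ => p.2 * gridLevel c n p.1

theorem mul_gridLevel_sq {c : ℝ} {n : ℕ} (hc : c ≠ 0) (hn : n ≠ 0) (j : ℕ) :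
    2 * n / c ^ 2 * gridLevel c n j ^ 2 = 2 ^ j := by
  have h2j : ((2 : ℝ) ^ ((j : ℝ) / 2)) ^ 2 = 2 ^ j := by
    rw [← rpow_natCast _ 2, ← rpow_mul zero_le_two, ← rpow_natCast]
    norm_num
  have hn' : (0 : ℝ) < n := Nat.cast_pos.2 (Nat.pos_of_ne_zero hn)
  rw [gridLevel, div_pow, mul_pow, h2j, sq_sqrt (by positivity)]
  field_simp

theorem sum_exp_neg_grid_le_two {c : ℝ} {n : ℕ} (hc : c ≠ 0) (hn : n ≠ 0) (m : ℕ) :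
    ∑ a ∈ grid c n m, exp (-(2 * n / c ^ 2 * a ^ 2)) ≤ 2 :=
  calc ∑ a ∈ grid c n m, exp (-(2 * n / c ^ 2 * a ^ 2))
      ≤ ∑ p ∈ range (m + 1) ×ˢ {1, -1},
          exp (-(2 * n / c ^ 2 * (p.2 * gridLevel c n p.1) ^ 2)) :=
        sum_image_le_of_nonneg fun _ _ => (exp_pos _).le
    _ = 2 * ∑ j ∈ range (m + 1), exp (-(2 : ℝ) ^ j) := by
        rw [sum_product, mul_sum]
        refine sum_congr rfl fun j _ => ?_
        rw [sum_pair (by norm_num), one_mul, neg_one_mul, neg_sq, mul_gridLevel_sq hc hn]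
        ring
    _ ≤ 2 := by linarith [sum_range_exp_neg_two_pow_le_one (m + 1)]

theorem mem_grid_and_sum_le {c : ℝ} {n m : ℕ} (hc : 0 < c) (hn : n ≠ 0) (w : Fin n → ℝ)
    (hw : l2 w ≤ c)
    (hcoord : ∀ i, ∃ j : ℕ, j ≤ m ∧ (w i = gridLevel c n j ∨ w i = -gridLevel c n j)) :
    (∀ i, w i ∈ grid c n m) ∧ ∑ i, 2 * n / c ^ 2 * w i ^ 2 ≤ 2 * (n : ℝ) := by
  refine ⟨fun i => ?_, ?_⟩
  · obtain ⟨j, hj, h | h⟩ := hcoord i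
    · exact mem_image.2 ⟨(j, 1), by simp [Nat.lt_succ_of_le hj], by simp [h]⟩
    · exact mem_image.2 ⟨(j, -1), by simp [Nat.lt_succ_of_le hj], by simp [h]⟩
  · have hsq : ∑ i, w i ^ 2 ≤ c ^ 2 := (sqrt_le_left hc.le).1 hw
    calc ∑ i, 2 * n / c ^ 2 * w i ^ 2 = 2 * n / c ^ 2 * ∑ i, w i ^ 2 := (mul_sum _ _ _).symm
      _ ≤ 2 * n / c ^ 2 * c ^ 2 := by gcongr
      _ = 2 * n := by field_simp

theorem statement5_general (d : ℕ) (hd : 0 < d) (m : ℕ) (c : ℝ) (hc : 0 < c) :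
    (Nat.card {w : Fin d → ℝ // l2 w ≤ c ∧
      ∀ i, ∃ j : ℕ, j ≤ m ∧
        (w i = c * (2 : ℝ) ^ ((j : ℝ) / 2) / Real.sqrt (2 * d) ∨
         w i = -(c * (2 : ℝ) ^ ((j : ℝ) / 2) / Real.sqrt (2 * d)))} : ℝ) ≤
      Real.exp (1.344 + 3.082 * d) := by
  set f : ℝ → ℝ := fun x => 2 * d / c ^ 2 * x ^ 2
  have hsub : {w : Fin d → ℝ | l2 w ≤ c ∧
      ∀ i, ∃ j : ℕ, j ≤ m ∧ (w i = gridLevel c d j ∨ w i = -gridLevel c d j)} ⊆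
      {w | (∀ i, w i ∈ grid c d m) ∧ ∑ i, f (w i) ≤ 2 * (d : ℝ)} :=
    fun w hw => mem_grid_and_sum_le hc hd.ne' w hw.1 hw.2
  have hfin : {w : Fin d → ℝ | (∀ i, w i ∈ grid c d m) ∧ ∑ i, f (w i) ≤ 2 * (d : ℝ)}.Finite :=
    (Fintype.piFinset fun _ => grid c d m).finite_toSet.subset fun w hw => by simpa using hw.1
  calc _ ≤ (Nat.card {w : Fin d → ℝ // (∀ i, w i ∈ grid c d m) ∧ ∑ i, f (w i) ≤ 2 * (d : ℝ)} : ℝ) :=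
        Nat.cast_le.2 (Nat.card_mono hfin hsub)
    _ ≤ exp (2 * d) * (∑ a ∈ grid c d m, exp (-f a)) ^ d := by
        simpa using card_sum_le_le_exp_mul (ι := Fin d) (grid c d m) f (2 * d)
    _ ≤ exp (2 * d) * exp 1 ^ d := by
        gcongr
        linarith [sum_exp_neg_grid_le_two hc.ne' hd.ne' m, add_one_le_exp (1 : ℝ)]
    _ = exp (3 * d) := by rw [← exp_nat_mul, ← exp_add]; ring_nf
    _ ≤ exp (1.344 + 3.082 * d) := exp_le_exp.2 (by linarith [(Nat.cast_nonneg d : (0 : ℝ) ≤ d)])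

/-- second part of Lemma A: cardinality bound for the discretized set. -/
theorem statement5 (d : ℕ) (hd : 0 < d) (δ : ℝ)
    (hδ : δ ∈ Set.Icc (1 / Real.sqrt d) 1)
    (m : ℕ) (hm1 : (2 : ℝ) ^ ((m : ℝ) / 2) < δ * Real.sqrt d)
    (hm2 : δ * Real.sqrt d ≤ (2 : ℝ) ^ (((m : ℝ) + 1) / 2))
    (c : ℝ) (hc : 0 < c) (hc1 : c ≤ 1) :
    (Nat.card {w : Fin d → ℝ // l2 w ≤ c ∧
      ∀ i, ∃ j : ℕ, j ≤ m ∧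
        (w i = c * (2 : ℝ) ^ ((j : ℝ) / 2) / Real.sqrt (2 * d) ∨
         w i = -(c * (2 : ℝ) ^ ((j : ℝ) / 2) / Real.sqrt (2 * d)))} : ℝ) ≤
      Real.exp (1.344 + 3.082 * d) :=
  statement5_general d hd m c hc

end IncoherentTensor
end
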